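/- arXiv:1101.4324 — 2 statements merged into one kernel-verified Lean document; each statement's English description precedes it below -/
import Mathlib

section
/- Suppose that for every ε ∈ (0,1) and every finite family x₁,…,x_m ∈ ℝⁿ there exist s₁,…,s_m ∈ [0,∞), at most ⌈n/ε²⌉ of them nonzero, such that (1−ε)² ∑_i ⟨x_i,y⟩² ≤ ∑_i s_i⟨x_i,y⟩² ≤ (1+ε)² ∑_i ⟨x_i,y⟩² for all y ∈ ℝⁿ. Then for every n×n symmetric matrix G with nonnegative entries there exists an n×n symmetric matrix H with nonnegative entries, supp(H) ⊆ supp(G), |supp(H)| ≤ 2⌈n/ε²⌉, and ∑_{i,j} g_{ij}(x_i−x_j)² ≤ ∑_{i,j} h_{ij}(x_i−x_j)² ≤ ((1+ε)/(1−ε))² ∑_{i,j} g_{ij}(x_i−x_j)² for all x ∈ ℝⁿ. -/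
open Matrix

/-- The spectral sparsification theorem for vectors implies the graph
sparsification theorem (Theorem 1.1 follows from Theorem 2.1). -/
theorem sparsification_of_vector_sparsification {n : ℕ}
    (hyp : ∀ ε : ℝ, ε ∈ Set.Ioo (0 : ℝ) 1 → ∀ m : ℕ, ∀ x : Fin m → Fin n → ℝ,
      ∃ s : Fin m → ℝ, (∀ i, 0 ≤ s i) ∧
        ({i : Fin m | s i ≠ 0}).ncard ≤ ⌈(n : ℝ) / ε ^ 2⌉₊ ∧
        ∀ y : Fin n → ℝ,
          (1 - ε) ^ 2 * ∑ i, (x i ⬝ᵥ y) ^ 2 ≤ ∑ i, s i * (x i ⬝ᵥ y) ^ 2 ∧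
            ∑ i, s i * (x i ⬝ᵥ y) ^ 2 ≤ (1 + ε) ^ 2 * ∑ i, (x i ⬝ᵥ y) ^ 2) :
    ∀ ε : ℝ, ε ∈ Set.Ioo (0 : ℝ) 1 → ∀ G : Matrix (Fin n) (Fin n) ℝ,
      G.IsSymm → (∀ i j, 0 ≤ G i j) →
      ∃ H : Matrix (Fin n) (Fin n) ℝ, H.IsSymm ∧ (∀ i j, 0 ≤ H i j) ∧
        (∀ i j, H i j ≠ 0 → G i j ≠ 0) ∧
        ({p : Fin n × Fin n | H p.1 p.2 ≠ 0}).ncard ≤ 2 * ⌈(n : ℝ) / ε ^ 2⌉₊ ∧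
        ∀ x : Fin n → ℝ,
          ∑ i, ∑ j, G i j * (x i - x j) ^ 2 ≤ ∑ i, ∑ j, H i j * (x i - x j) ^ 2 ∧
            ∑ i, ∑ j, H i j * (x i - x j) ^ 2 ≤
              ((1 + ε) / (1 - ε)) ^ 2 * ∑ i, ∑ j, G i j * (x i - x j) ^ 2 := by
  intro ε hε G hGsymm hGnn
  obtain ⟨hε0, hε1⟩ := hε
  have hGsym : ∀ i j, G j i = G i j := fun i j => hGsymm.apply i j
  set e : Fin (n*n) ≃ Fin n × Fin n := finProdFinEquiv.symm with he
  set x : Fin (n*n) → Fin n → ℝ := fun k t =>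
    Real.sqrt (G (e k).1 (e k).2) * ((if t = (e k).1 then (1:ℝ) else 0) - (if t = (e k).2 then 1 else 0)) with hx
  obtain ⟨s, hs0, hscard, hsQ⟩ := hyp ε ⟨hε0, hε1⟩ (n*n) x
  have hdotsq : ∀ k (y : Fin n → ℝ), (x k ⬝ᵥ y) ^ 2 =
      G (e k).1 (e k).2 * (y (e k).1 - y (e k).2) ^ 2 := by
    intro k y
    have : x k ⬝ᵥ y = Real.sqrt (G (e k).1 (e k).2) * (y (e k).1 - y (e k).2) := by
      simp [hx, dotProduct, sub_mul, mul_assoc, Finset.sum_sub_distrib, mul_sub,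
        ← Finset.mul_sum, ite_mul, mul_comm]
    rw [this, mul_pow, Real.sq_sqrt (hGnn _ _)]
  set σ : Fin n × Fin n → ℝ := fun p => s (e.symm p) with hσ
  have hσ0 : ∀ p, 0 ≤ σ p := fun p => hs0 _
  have hsum : ∀ (c : Fin n × Fin n → ℝ) (y : Fin n → ℝ),
      ∑ k, c (e k) * (x k ⬝ᵥ y) ^ 2
        = ∑ i, ∑ j, c (i, j) * (G i j * (y i - y j) ^ 2) := by
    intro c y
    calc ∑ k, c (e k) * (x k ⬝ᵥ y) ^ 2
        = ∑ k, (fun p : Fin n × Fin n => c p * (G p.1 p.2 * (y p.1 - y p.2) ^ 2)) (e k) :=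
          Finset.sum_congr rfl fun k _ => by simp only [hdotsq]
      _ = ∑ p : Fin n × Fin n, c p * (G p.1 p.2 * (y p.1 - y p.2) ^ 2) :=
          Equiv.sum_comp e (fun p : Fin n × Fin n => c p * (G p.1 p.2 * (y p.1 - y p.2) ^ 2))
      _ = ∑ i, ∑ j, c (i, j) * (G i j * (y i - y j) ^ 2) := Fintype.sum_prod_type _
  have hσe : ∀ k, σ (e k) = s k := fun k => by simp [hσ]
  have hQ : ∀ y : Fin n → ℝ, ∑ k, (x k ⬝ᵥ y) ^ 2 = ∑ i, ∑ j, G i j * (y i - y j) ^ 2 := by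
    intro y
    have := hsum (fun _ => 1) y
    simpa using this
  have hS : ∀ y : Fin n → ℝ, ∑ k, s k * (x k ⬝ᵥ y) ^ 2
      = ∑ i, ∑ j, σ (i, j) * (G i j * (y i - y j) ^ 2) := by
    intro y
    rw [← hsum σ y]
    exact Finset.sum_congr rfl fun k _ => by rw [hσe]
  have h1ε : (0:ℝ) < 1 - ε := by linarith
  have hD : (0:ℝ) < (1 - ε) ^ 2 := pow_pos h1ε 2
  set H : Matrix (Fin n) (Fin n) ℝ :=
    Matrix.of fun i j => (σ (i, j) + σ (j, i)) / (2 * (1 - ε) ^ 2) * G i j with hH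
  refine ⟨H, ?_, ?_, ?_, ?_, ?_⟩
  · ext i j
    simp only [hH, Matrix.transpose_apply, Matrix.of_apply]
    rw [hGsym j i]
    ring
  · intro i j
    have h1 : (0:ℝ) ≤ (σ (i, j) + σ (j, i)) / (2 * (1 - ε) ^ 2) :=
      div_nonneg (add_nonneg (hσ0 _) (hσ0 _)) (by nlinarith)
    exact mul_nonneg h1 (hGnn i j)
  · intro i j hne hG0
    apply hne
    simp [hH, hG0]
  · have hsub : {p : Fin n × Fin n | H p.1 p.2 ≠ 0} ⊆
        (e '' {k | s k ≠ 0}) ∪ (Prod.swap ∘ e) '' {k | s k ≠ 0} := by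
      intro p hp
      simp only [Set.mem_setOf_eq, hH, Matrix.of_apply] at hp
      have h1 : σ (p.1, p.2) ≠ 0 ∨ σ (p.2, p.1) ≠ 0 := by
        by_contra h
        push_neg at h
        exact hp (by rw [h.1, h.2]; ring)
      rcases h1 with h1 | h1
      · left
        exact ⟨e.symm (p.1, p.2), by simpa [hσ] using h1, by simp⟩
      · right
        exact ⟨e.symm (p.2, p.1), by simpa [hσ] using h1, by simp⟩
    calc ({p : Fin n × Fin n | H p.1 p.2 ≠ 0}).ncard
        ≤ ((e '' {k | s k ≠ 0}) ∪ (Prod.swap ∘ e) '' {k | s k ≠ 0}).ncard :=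
          Set.ncard_le_ncard hsub (Set.toFinite _)
      _ ≤ (e '' {k | s k ≠ 0}).ncard + ((Prod.swap ∘ e) '' {k | s k ≠ 0}).ncard :=
          Set.ncard_union_le _ _
      _ ≤ 2 * ⌈(n : ℝ) / ε ^ 2⌉₊ := by
          rw [Set.ncard_image_of_injective _ e.injective,
            Set.ncard_image_of_injective _ (Prod.swap_injective.comp e.injective)]
          omega
  · intro y
    obtain ⟨hlo, hhi⟩ := hsQ y
    have hswap : ∑ i, ∑ j, σ (j, i) * (G i j * (y i - y j) ^ 2)
        = ∑ i, ∑ j, σ (i, j) * (G i j * (y i - y j) ^ 2) := by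
      rw [Finset.sum_comm]
      refine Finset.sum_congr rfl fun i _ => Finset.sum_congr rfl fun j _ => ?_
      rw [hGsym j i]
      ring
    have hterm : ∀ i j, H i j * (y i - y j) ^ 2 =
        (σ (i, j) * (G i j * (y i - y j) ^ 2)
          + σ (j, i) * (G i j * (y i - y j) ^ 2)) / (2 * (1 - ε) ^ 2) := by
      intro i j
      simp only [hH, Matrix.of_apply]
      field_simp
    have hHform : ∑ i, ∑ j, H i j * (y i - y j) ^ 2
        = (∑ k, s k * (x k ⬝ᵥ y) ^ 2) / (1 - ε) ^ 2 := by
      simp_rw [hterm, ← Finset.sum_div, Finset.sum_add_distrib]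
      rw [hswap, hS]
      field_simp
      ring
    constructor
    · rw [hHform, le_div_iff₀ hD, ← hQ y, mul_comm]
      exact hlo
    · rw [hHform, div_pow, ← hQ y, div_mul_eq_mul_div]
      exact div_le_div_of_nonneg_right hhi hD.le
end

section
/- Let T : ℝⁿ → ℝⁿ be linear and Q₀ = I, Q₁, …, Q_{i-1} be orthogonal projections such that tr(Q_{r-1} − Q_r) ≤ 1 and Q_{r-1} − Q_r is positive semidefinite for each r. Then ‖Q_{i-1}T‖_HS² ≥ ‖T‖_HS² − (i−1)‖T‖², where ‖·‖_HS is the Hilbert–Schmidt norm and ‖·‖ the operator norm. -/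
open Matrix

set_option maxHeartbeats 1000000
set_option synthInstance.maxHeartbeats 400000

private lemma mulVec_sq_sum_le {n : ℕ} (T : Matrix (Fin n) (Fin n) ℝ) (x : Fin n → ℝ) :
    ∑ j, (Tᵀ.mulVec x j) ^ 2 ≤
      ‖Matrix.toEuclideanCLM (𝕜 := ℝ) T‖ ^ 2 * ∑ j, (x j) ^ 2 := by
  set c := ‖Matrix.toEuclideanCLM (𝕜 := ℝ) T‖ with hc
  have hT : ‖Matrix.toEuclideanCLM (𝕜 := ℝ) Tᵀ‖ = c := by
    have : Tᵀ = star T := rfl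
    rw [this, map_star, ContinuousLinearMap.star_eq_adjoint]
    exact LinearIsometryEquiv.norm_map ContinuousLinearMap.adjoint _
  have h := (Matrix.toEuclideanCLM (𝕜 := ℝ) Tᵀ).le_opNorm ((WithLp.equiv 2 _).symm x)
  rw [show (Matrix.toEuclideanCLM (𝕜 := ℝ) Tᵀ) ((WithLp.equiv 2 (Fin n → ℝ)).symm x)
      = (WithLp.equiv 2 (Fin n → ℝ)).symm (Matrix.toLin' Tᵀ x) from rfl, hT] at h
  have hxnorm : ‖(WithLp.equiv 2 (Fin n → ℝ)).symm x‖ = Real.sqrt (∑ j, (x j) ^ 2) := by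
    rw [EuclideanSpace.norm_eq]
    simp [sq_abs]
  have hynorm : ‖(WithLp.equiv 2 (Fin n → ℝ)).symm (Matrix.toLin' Tᵀ x)‖
      = Real.sqrt (∑ j, (Tᵀ.mulVec x j) ^ 2) := by
    rw [EuclideanSpace.norm_eq]
    simp [Matrix.toLin'_apply, sq_abs]
  rw [hynorm, hxnorm] at h
  have h2 := mul_self_le_mul_self (Real.sqrt_nonneg _) h
  rw [Real.mul_self_sqrt (by positivity)] at h2
  calc ∑ j, (Tᵀ.mulVec x j) ^ 2
      ≤ (c * Real.sqrt (∑ j, (x j) ^ 2)) * (c * Real.sqrt (∑ j, (x j) ^ 2)) := h2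
    _ = c ^ 2 * (Real.sqrt (∑ j, (x j) ^ 2) * Real.sqrt (∑ j, (x j) ^ 2)) := by ring
    _ = c ^ 2 * ∑ j, (x j) ^ 2 := by rw [Real.mul_self_sqrt (by positivity)]

open scoped MatrixOrder in
private lemma trace_conj_le {n : ℕ} (T : Matrix (Fin n) (Fin n) ℝ)
    {S : Matrix (Fin n) (Fin n) ℝ} (hS : S.PosSemidef) :
    (Tᵀ * S * T).trace ≤ ‖Matrix.toEuclideanCLM (𝕜 := ℝ) T‖ ^ 2 * S.trace := by
  set c := ‖Matrix.toEuclideanCLM (𝕜 := ℝ) T‖ with hc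
  obtain ⟨B, rfl⟩ : ∃ B : Matrix (Fin n) (Fin n) ℝ, S = Bᴴ * B := CStarAlgebra.nonneg_iff_eq_star_mul_self.mp hS.nonneg
  have hTt : Tᴴ = Tᵀ := by ext i j; simp
  have h1 : (Tᵀ * (Bᴴ * B) * T).trace = ((B * T) * (B * T)ᴴ).trace := by
    conv_rhs => rw [Matrix.trace_mul_comm]
    rw [Matrix.conjTranspose_mul, hTt]
    simp only [Matrix.mul_assoc]
  have h2 : ((B * T) * (B * T)ᴴ).trace = ∑ i, ∑ j, ((B * T) i j) ^ 2 := by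
    simp only [Matrix.trace, Matrix.diag, Matrix.mul_apply, Matrix.conjTranspose_apply,
      star_trivial, sq]
  have h3 : (Bᴴ * B).trace = ∑ i, ∑ j, (B i j) ^ 2 := by
    rw [Matrix.trace_mul_comm]
    simp only [Matrix.trace, Matrix.diag, Matrix.mul_apply, Matrix.conjTranspose_apply,
      star_trivial, sq]
  rw [h1, h2, h3, Finset.mul_sum]
  apply Finset.sum_le_sum
  intro i _
  have hrow : ∀ j, (B * T) i j = Tᵀ.mulVec (B i) j := by
    intro j
    simp [Matrix.mul_apply, Matrix.mulVec, dotProduct, Matrix.transpose_apply,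
      mul_comm]
  calc ∑ j, ((B * T) i j) ^ 2 = ∑ j, (Tᵀ.mulVec (B i) j) ^ 2 := by
        exact Finset.sum_congr rfl fun j _ => by rw [hrow j]
    _ ≤ c ^ 2 * ∑ j, (B i j) ^ 2 := mulVec_sq_sum_le T (B i)

/-- If `Q 0 = I` and each step `Q r - Q (r+1)` is a trace-at-most-one positive
semidefinite difference of orthogonal projections, then
`‖Q k T‖_HS² ≥ ‖T‖_HS² - k ‖T‖²`. -/
theorem hilbert_schmidt_projection_bound {n : ℕ} (T : Matrix (Fin n) (Fin n) ℝ)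
    (Q : ℕ → Matrix (Fin n) (Fin n) ℝ) (k : ℕ)
    (hQ0 : Q 0 = 1)
    (hproj : ∀ r, r ≤ k → (Q r).IsSymm ∧ Q r * Q r = Q r)
    (hstep : ∀ r, r < k →
      (Q r - Q (r + 1)).PosSemidef ∧ (Q r - Q (r + 1)).trace ≤ 1) :
    (Tᵀ * T).trace - (k : ℝ) * ‖Matrix.toEuclideanCLM (𝕜 := ℝ) T‖ ^ 2 ≤
      (Tᵀ * Q k * T).trace := by
  set c := ‖Matrix.toEuclideanCLM (𝕜 := ℝ) T‖ with hc
  induction k with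
  | zero => simp [hQ0]
  | succ k ih =>
    have ih' := ih (fun r hr => hproj r (hr.trans (Nat.le_succ k)))
      (fun r hr => hstep r (hr.trans (Nat.lt_succ_self k)))
    have hk := hstep k (Nat.lt_succ_self k)
    have hle : (Tᵀ * (Q k - Q (k + 1)) * T).trace ≤ c ^ 2 := by
      calc (Tᵀ * (Q k - Q (k + 1)) * T).trace
          ≤ c ^ 2 * (Q k - Q (k + 1)).trace := trace_conj_le T hk.1
        _ ≤ c ^ 2 * 1 := by
            apply mul_le_mul_of_nonneg_left hk.2 (by positivity)
        _ = c ^ 2 := mul_one _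
    have hsplit : (Tᵀ * (Q k - Q (k + 1)) * T).trace
        = (Tᵀ * Q k * T).trace - (Tᵀ * Q (k + 1) * T).trace := by
      rw [Matrix.mul_sub, Matrix.sub_mul, Matrix.trace_sub]
    push_cast
    linarith
end
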